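/- Let A be a Lie algebroid and Δ a Dorfman connection Γ(TM ⊕ A*) × Γ(A ⊕ T*M) → Γ(A ⊕ T*M). Then for all ν ∈ Γ(TM ⊕ A*) and τ, τ' ∈ Γ(A ⊕ T*M): ⟨(ρ,ρᵗ)Δ_ν τ − ⟦ν, (ρ,ρᵗ)τ⟧_Δ − ∇^bas_τ ν, τ'⟩ = ⟨∇^bas_{τ'} ν, τ⟩, where ⟦·,·⟧_Δ is the dull bracket dual to Δ and ∇^bas_τ ν = (ρ,ρᵗ)(Δ_ν(pr_A τ, 0) − (0, d⟨ν,(pr_A τ,0)⟩)) + L_{pr_A τ} ν. -/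

import Mathlib

/-! Algebraic model of differential geometry: the "functions" form a commutative
ℝ-algebra `R`, vector fields are `ℝ`-derivations of `R`, and one-forms are the
`R`-dual of the module of vector fields. -/

variable (R : Type*) [CommRing R] [Algebra ℝ R]

/-- Vector fields on the "manifold" with function algebra `R`. -/
abbrev VF := Derivation ℝ R R

/-- One-forms: the `R`-dual of the module of vector fields. -/
abbrev OneForm := VF R →ₗ[R] R

variable {R}

lemma vf_bracket_smul (X Y : VF R) (f : R) :
    ⁅X, f • Y⁆ = f • ⁅X, Y⁆ + (X f) • Y := by
  ext a
  simp only [Derivation.commutator_apply, Derivation.smul_apply, smul_eq_mul,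
    Derivation.leibniz, Derivation.add_apply]
  ring

/-- The differential of a function, as a one-form. -/
noncomputable def dF (f : R) : OneForm R where
  toFun X := X f
  map_add' X Y := rfl
  map_smul' r X := rfl

/-- The Lie derivative of a one-form along a vector field. -/
noncomputable def lieD (X : VF R) (θ : OneForm R) : OneForm R where
  toFun Y := X (θ Y) - θ ⁅X, Y⁆
  map_add' Y Z := by simp only [map_add, lie_add]; ring
  map_smul' f Y := by
    simp only [map_smul, smul_eq_mul, vf_bracket_smul, map_add, Derivation.leibniz,
      RingHom.id_apply]
    ring

/-- The interior product `ι_Y (dθ)` of the exterior differential of a one-form. -/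
noncomputable def iotaD (Y : VF R) (θ : OneForm R) : OneForm R where
  toFun X := Y (θ X) - X (θ Y) - θ ⁅Y, X⁆
  map_add' X Z := by simp only [map_add, lie_add, Derivation.add_apply]; ring
  map_smul' f X := by
    simp only [map_smul, smul_eq_mul, vf_bracket_smul, map_add, Derivation.leibniz,
      Derivation.smul_apply, RingHom.id_apply]
    ring

/-- The Courant–Dorfman bracket on sections of `TM ⊕ T*M`. -/
noncomputable def cbracket (e₁ e₂ : VF R × OneForm R) : VF R × OneForm R :=
  (⁅e₁.1, e₂.1⁆, lieD e₁.1 e₂.2 - iotaD e₂.1 e₁.2)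

/-- The canonical symmetric pairing on sections of `TM ⊕ T*M`. -/
noncomputable def cpair (e₁ e₂ : VF R × OneForm R) : R := e₁.2 e₂.1 + e₂.2 e₁.1

/-- A Lie algebroid (in the algebraic section model): an `R`-module `A` with a Lie
bracket on sections and an anchor `ρ : A → TM` satisfying the Leibniz rule and
preserving brackets. -/
structure LieAlgebroid (R : Type*) [CommRing R] [Algebra ℝ R]
    (A : Type*) [AddCommGroup A] [Module R A] where
  bracket : A → A → A
  bracket_add_left : ∀ a b c, bracket (a + b) c = bracket a c + bracket b c
  bracket_add_right : ∀ a b c, bracket a (b + c) = bracket a b + bracket a c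
  skew : ∀ a b, bracket a b = - bracket b a
  jacobi : ∀ a b c,
    bracket a (bracket b c) = bracket (bracket a b) c + bracket b (bracket a c)
  anchor : A →ₗ[R] VF R
  leibniz : ∀ a (f : R) b, bracket a (f • b) = f • bracket a b + (anchor a f) • b
  anchor_bracket : ∀ a b, anchor (bracket a b) = ⁅anchor a, anchor b⁆

variable {A : Type*} [AddCommGroup A] [Module R A]

/-- The pairing of the degenerate Courant algebroid `A ⊕ T*M`:
`⟨(a₁,θ₁),(a₂,θ₂)⟩_d = θ₂(ρ a₁) + θ₁(ρ a₂)`. -/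
noncomputable def dpair (L : LieAlgebroid R A) (τ₁ τ₂ : A × OneForm R) : R :=
  τ₂.2 (L.anchor τ₁.1) + τ₁.2 (L.anchor τ₂.1)

/-- The bracket of the degenerate Courant algebroid `A ⊕ T*M`:
`[(a₁,θ₁),(a₂,θ₂)]_d = ([a₁,a₂], L_{ρ a₁} θ₂ − ι_{ρ a₂} dθ₁)`. -/
noncomputable def dbracket (L : LieAlgebroid R A) (τ₁ τ₂ : A × OneForm R) :
    A × OneForm R :=
  (L.bracket τ₁.1 τ₂.1, lieD (L.anchor τ₁.1) τ₂.2 - iotaD (L.anchor τ₂.1) τ₁.2)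

/-- The canonical pairing between `TM ⊕ A*` and `A ⊕ T*M`: `⟨(X,α),(a,θ)⟩ = α(a) + θ(X)`. -/
noncomputable def mixPair (ν : VF R × (A →ₗ[R] R)) (τ : A × OneForm R) : R :=
  ν.2 τ.1 + τ.2 ν.1

/-- A Dorfman connection `Δ : Γ(TM ⊕ A*) × Γ(A ⊕ T*M) → Γ(A ⊕ T*M)` relative to the
anchor `pr_TM` and the canonical pairing. -/
structure DorfmanConn (R : Type*) [CommRing R] [Algebra ℝ R]
    (A : Type*) [AddCommGroup A] [Module R A] where
  conn : (VF R × (A →ₗ[R] R)) → (A × OneForm R) → (A × OneForm R)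
  add_left : ∀ ν₁ ν₂ τ, conn (ν₁ + ν₂) τ = conn ν₁ τ + conn ν₂ τ
  add_right : ∀ ν τ₁ τ₂, conn ν (τ₁ + τ₂) = conn ν τ₁ + conn ν τ₂
  /-- `Δ_ν` is a derivation over `pr_TM(ν)`. -/
  leibniz : ∀ ν (f : R) τ, conn ν (f • τ) = f • conn ν τ + (ν.1 f) • τ
  /-- `Δ_{fν} τ = f Δ_ν τ + ⟨ν,τ⟩ · (0, df)`. -/
  smul_left : ∀ (f : R) ν τ,
    conn (f • ν) τ = f • conn ν τ + (mixPair ν τ) • ((0 : A), dF f)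
  /-- `Δ_ν (0, df) = (0, d(pr_TM(ν) f))`. -/
  conn_d : ∀ ν (f : R), conn ν ((0 : A), dF f) = ((0 : A), dF (ν.1 f))


/-- The map `(ρ, ρᵗ) : A ⊕ T*M → TM ⊕ A*`, `(a,θ) ↦ (ρ(a), θ ∘ ρ)`. -/
noncomputable def rr (L : LieAlgebroid R A) (τ : A × OneForm R) :
    VF R × (A →ₗ[R] R) :=
  (L.anchor τ.1, τ.2 ∘ₗ L.anchor)


/-- `Ω_ν a = Δ_ν (a,0) − (0, d⟨ν,(a,0)⟩)`. -/
noncomputable def Omga (Dc : DorfmanConn R A) (ν : VF R × (A →ₗ[R] R)) (a : A) :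
    A × OneForm R :=
  Dc.conn ν (a, 0) - ((0 : A), dF (ν.2 a))


/-- The Lie derivative `L_a` on `Γ(A ⊕ T*M)`: `L_a (a',θ) = ([a,a'], L_{ρ(a)} θ)`. -/
noncomputable def lieTau (L : LieAlgebroid R A) (a : A) (τ : A × OneForm R) :
    A × OneForm R :=
  (L.bracket a τ.1, lieD (L.anchor a) τ.2)


/-- The Lie algebroid Lie derivative of a section of `A*` along a section of `A`. -/
noncomputable def lieADual (L : LieAlgebroid R A) (a : A) (α : A →ₗ[R] R) :
    A →ₗ[R] R where
  toFun b := L.anchor a (α b) - α (L.bracket a b)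
  map_add' b c := by simp only [map_add, L.bracket_add_right]; ring
  map_smul' f b := by
    simp only [map_smul, smul_eq_mul, L.leibniz, map_add, Derivation.leibniz,
      RingHom.id_apply]
    ring


/-- The Lie derivative `L_a` on `Γ(TM ⊕ A*)`: `L_a (X,α) = ([ρ(a),X], L_a α)`. -/
noncomputable def lieNu (L : LieAlgebroid R A) (a : A) (ν : VF R × (A →ₗ[R] R)) :
    VF R × (A →ₗ[R] R) :=
  (⁅L.anchor a, ν.1⁆, lieADual L a ν.2)


/-- The basic connection `∇^bas : Γ(A) × Γ(TM ⊕ A*) → Γ(TM ⊕ A*)`,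
`∇^bas_a ν = (ρ,ρᵗ)(Ω_ν a) + L_a ν`. -/
noncomputable def nbasA (L : LieAlgebroid R A) (Dc : DorfmanConn R A) (a : A)
    (ν : VF R × (A →ₗ[R] R)) : VF R × (A →ₗ[R] R) :=
  rr L (Omga Dc ν a) + lieNu L a ν


/-- The basic curvature `R^bas_Δ ∈ Ω²(A, Hom(TM ⊕ A*, A ⊕ T*M))`. -/
noncomputable def Rbas (L : LieAlgebroid R A) (Dc : DorfmanConn R A) (a₁ a₂ : A)
    (ν : VF R × (A →ₗ[R] R)) : A × OneForm R :=
  - Omga Dc ν (L.bracket a₁ a₂) + lieTau L a₁ (Omga Dc ν a₂)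
    - lieTau L a₂ (Omga Dc ν a₁)
    + Omga Dc (nbasA L Dc a₂ ν) a₁ - Omga Dc (nbasA L Dc a₁ ν) a₂

/-- The basic connection `∇^bas : Γ(A ⊕ T*M) × Γ(TM ⊕ A*) → Γ(TM ⊕ A*)`,
`∇^bas_τ ν = (ρ,ρᵗ)(Δ_ν(pr_A τ, 0) − (0, d⟨ν,(pr_A τ,0)⟩)) + L_{pr_A τ} ν`. -/
noncomputable def nbasTau (R : Type*) [CommRing R] [Algebra ℝ R]
    {A : Type*} [AddCommGroup A] [Module R A]
    (L : LieAlgebroid R A) (Dc : DorfmanConn R A) (τ : A × OneForm R)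
    (ν : VF R × (A →ₗ[R] R)) : VF R × (A →ₗ[R] R) :=
  rr L (Omga Dc ν τ.1) + lieNu L τ.1 ν

/-! Write `τ = (a, θ)`, `τ' = (a', θ')` and `X = pr_TM ν`. Along `(ρ, ρᵗ)` the pairing `⟨·,·⟩`
becomes the symmetric pairing `⟨·,·⟩_d` of `A ⊕ T*M`. Testing the duality against `(0, df)`
gives `pr_TM ⟦ν₁, ν₂⟧_Δ = [pr_TM ν₁, pr_TM ν₂]`, hence `Δ_ν (0, θ)` pairs with the image of
`(ρ, ρᵗ)` like `(0, L_X θ)`. Moving `∇^bas_τ ν` to the right, the identity becomes symmetric in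
`τ, τ'`, and both sides expand to
`⟨τ', Δ_ν (a, 0)⟩_d + ⟨τ, Δ_ν (a', 0)⟩_d + θ'[ρ a, X] + θ[ρ a', X]`;
the `A*`-terms of the Lie derivatives cancel by skew-symmetry of the bracket of `A`. -/

lemma dF_apply (f : R) (X : VF R) : dF f X = X f := rfl

lemma lieD_apply (X Y : VF R) (θ : OneForm R) : lieD X θ Y = X (θ Y) - θ ⁅X, Y⁆ := rfl

lemma lieADual_apply (L : LieAlgebroid R A) (a b : A) (α : A →ₗ[R] R) :
    lieADual L a α b = L.anchor a (α b) - α (L.bracket a b) := rfl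

lemma mixPair_sub_left (ν₁ ν₂ : VF R × (A →ₗ[R] R)) (τ : A × OneForm R) :
    mixPair (ν₁ - ν₂) τ = mixPair ν₁ τ - mixPair ν₂ τ := by
  simp only [mixPair, Prod.fst_sub, Prod.snd_sub, LinearMap.sub_apply, map_sub]
  ring

lemma mixPair_rr (L : LieAlgebroid R A) (τ₁ τ₂ : A × OneForm R) :
    mixPair (rr L τ₁) τ₂ = dpair L τ₁ τ₂ :=
  add_comm _ _

lemma dpair_comm (L : LieAlgebroid R A) (τ₁ τ₂ : A × OneForm R) :
    dpair L τ₁ τ₂ = dpair L τ₂ τ₁ :=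
  add_comm _ _

lemma dpair_add_right (L : LieAlgebroid R A) (τ σ₁ σ₂ : A × OneForm R) :
    dpair L τ (σ₁ + σ₂) = dpair L τ σ₁ + dpair L τ σ₂ := by
  simp only [dpair, Prod.fst_add, Prod.snd_add, LinearMap.add_apply, map_add]
  ring

namespace DorfmanConn

lemma conn_eq_add (Dc : DorfmanConn R A) (ν : VF R × (A →ₗ[R] R)) (τ : A × OneForm R) :
    Dc.conn ν τ = Dc.conn ν (τ.1, 0) + Dc.conn ν ((0 : A), τ.2) := by
  rw [← Dc.add_right, Prod.mk_add_mk, add_zero, zero_add]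

def IsDualBracket (Dc : DorfmanConn R A)
    (db : (VF R × (A →ₗ[R] R)) → (VF R × (A →ₗ[R] R)) → (VF R × (A →ₗ[R] R))) : Prop :=
  ∀ ν₁ ν₂ τ, mixPair (db ν₁ ν₂) τ = ν₁.1 (mixPair ν₂ τ) - mixPair ν₂ (Dc.conn ν₁ τ)

section IsDualBracket

variable {Dc : DorfmanConn R A}
  {db : (VF R × (A →ₗ[R] R)) → (VF R × (A →ₗ[R] R)) → (VF R × (A →ₗ[R] R))}

lemma IsDualBracket.fst_eq (hdb : Dc.IsDualBracket db)
    (ν₁ ν₂ : VF R × (A →ₗ[R] R)) :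
    (db ν₁ ν₂).1 = ⁅ν₁.1, ν₂.1⁆ := by
  ext f
  have h := hdb ν₁ ν₂ ((0 : A), dF f)
  simp only [Dc.conn_d, mixPair, map_zero, zero_add, dF_apply] at h
  rw [h, Derivation.commutator_apply]

lemma IsDualBracket.mixPair_conn_zero (hdb : Dc.IsDualBracket db)
    (ν₁ ν₂ : VF R × (A →ₗ[R] R)) (θ : OneForm R) :
    mixPair ν₂ (Dc.conn ν₁ ((0 : A), θ)) = lieD ν₁.1 θ ν₂.1 := by
  have h := hdb ν₁ ν₂ ((0 : A), θ)
  simp only [mixPair, map_zero, zero_add, hdb.fst_eq] at h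
  rw [lieD_apply, h, mixPair]
  ring

lemma dpair_conn_add_swap (L : LieAlgebroid R A) (hdb : Dc.IsDualBracket db)
    (ν : VF R × (A →ₗ[R] R)) (τ τ' : A × OneForm R) :
    dpair L τ' (Dc.conn ν τ) + dpair L τ (Dc.conn ν τ') - ν.1 (dpair L τ τ')
      = dpair L τ' (Dc.conn ν (τ.1, 0)) + dpair L τ (Dc.conn ν (τ'.1, 0))
        + τ'.2 ⁅L.anchor τ.1, ν.1⁆ + τ.2 ⁅L.anchor τ'.1, ν.1⁆ := by
  have hθ := hdb.mixPair_conn_zero ν (rr L τ') τ.2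
  have hθ' := hdb.mixPair_conn_zero ν (rr L τ) τ'.2
  rw [mixPair_rr] at hθ hθ'
  rw [Dc.conn_eq_add ν τ, Dc.conn_eq_add ν τ', dpair_add_right, dpair_add_right, hθ, hθ',
    lieD_apply, lieD_apply, ← lie_skew (L.anchor τ.1), ← lie_skew (L.anchor τ'.1)]
  simp only [rr, dpair, map_neg, map_add]
  ring

end IsDualBracket

end DorfmanConn

lemma mixPair_nbasTau_add_swap (L : LieAlgebroid R A) (Dc : DorfmanConn R A)
    (ν : VF R × (A →ₗ[R] R)) (τ τ' : A × OneForm R) :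
    mixPair (nbasTau R L Dc τ ν) τ' + mixPair (nbasTau R L Dc τ' ν) τ
      = dpair L τ' (Dc.conn ν (τ.1, 0)) + dpair L τ (Dc.conn ν (τ'.1, 0))
        + τ'.2 ⁅L.anchor τ.1, ν.1⁆ + τ.2 ⁅L.anchor τ'.1, ν.1⁆ := by
  have hskew : ν.2 (L.bracket τ'.1 τ.1) = - ν.2 (L.bracket τ.1 τ'.1) := by
    rw [L.skew, map_neg]
  simp only [nbasTau, Omga, lieNu, mixPair, rr, Prod.fst_add, Prod.snd_add, Prod.fst_sub,
    Prod.snd_sub, LinearMap.add_apply, LinearMap.sub_apply, LinearMap.comp_apply,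
    lieADual_apply, dF_apply, map_add, sub_zero, dpair]
  linear_combination -hskew

theorem dorfman_duality_identity (R : Type*) [CommRing R] [Algebra ℝ R]
    {A : Type*} [AddCommGroup A] [Module R A]
    (L : LieAlgebroid R A) (Dc : DorfmanConn R A)
    (db : (VF R × (A →ₗ[R] R)) → (VF R × (A →ₗ[R] R)) → (VF R × (A →ₗ[R] R)))
    (hdb : ∀ ν₁ ν₂ τ,
      mixPair (db ν₁ ν₂) τ = ν₁.1 (mixPair ν₂ τ) - mixPair ν₂ (Dc.conn ν₁ τ))
    (ν : VF R × (A →ₗ[R] R)) (τ τ' : A × OneForm R) :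
    mixPair (rr L (Dc.conn ν τ) - db ν (rr L τ) - nbasTau R L Dc τ ν) τ'
      = mixPair (nbasTau R L Dc τ' ν) τ := by
  have hconn := DorfmanConn.dpair_conn_add_swap L hdb ν τ τ'
  have hbas := mixPair_nbasTau_add_swap L Dc ν τ τ'
  rw [mixPair_sub_left, mixPair_sub_left, hdb, mixPair_rr, mixPair_rr, mixPair_rr,
    dpair_comm L (Dc.conn ν τ)]
  linear_combination hconn - hbas
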